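/- arXiv:1809.10761 — 3 statements merged into one kernel-verified Lean document; each statement's English description precedes it below -/
import Mathlib

section
/- Every finite graph G1 has a spanning subgraph G1' such that for every vertex v, the degree of v in G1' lies in the interval [(9/16)·d_{G1}(v) − 3, (9/16)·d_{G1}(v) + 3]. -/
/-!
Taking every other edge of a trail gives each vertex half of its trail edges, up to an error
of one at each end of the trail. The ends of a longest trail carry all their edges on the
trail, so removing such a trail and recursing shows that every edge set has a subset `T` with
`|2 d_T(v) - d(v)| ≤ 2` at every vertex. Halving four times gives `T₄ ⊆ T₁` with
`d_{T₁} ≈ d / 2` and `d_{T₄} ≈ d / 16`; the edge set `(E \ T₁) ∪ T₄` then has degrees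
`d - d_{T₁} + d_{T₄} ≈ 9 d / 16`, with an accumulated error of at most `21 / 8 < 3`.
-/

open Finset

namespace List

variable {α : Type*}

def alternate : List α → List α
  | [] => []
  | [a] => [a]
  | a :: _ :: l => a :: alternate l

theorem alternate_sublist : ∀ l : List α, l.alternate.Sublist l
  | [] => .slnil
  | [_] => .refl _
  | a :: b :: l => ((alternate_sublist l).cons b).cons_cons a

theorem two_mul_countP_alternate_sub_countP (p : α → Prop) [DecidablePred p] :
    ∀ l : List α, 2 * (l.alternate.countP p : ℤ) - l.countP p =
      (l.map fun a => if p a then 1 else 0).alternatingSum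
  | [] => by simp [alternate]
  | [a] => by by_cases h : p a <;> simp [alternate, h]
  | a :: b :: l => by
    rw [map_cons, map_cons, alternatingSum_cons_cons, ← two_mul_countP_alternate_sub_countP p l]
    simp only [alternate, countP_cons, decide_eq_true_eq]
    split_ifs <;> push_cast <;> ring

theorem Nodup.card_filter_toFinset [DecidableEq α] {l : List α} (hl : l.Nodup) (p : α → Prop)
    [DecidablePred p] : #{a ∈ l.toFinset | p a} = l.countP p := by
  rw [countP_eq_length_filter, ← toFinset_card_of_nodup (hl.filter _)]
  congr 1
  ext
  simp

end List

theorem Finset.card_filter_union_of_disjoint {α : Type*} [DecidableEq α] {s t : Finset α}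
    (h : Disjoint s t) (p : α → Prop) [DecidablePred p] :
    #{a ∈ s ∪ t | p a} = #{a ∈ s | p a} + #{a ∈ t | p a} := by
  rw [filter_union, card_union_of_disjoint (disjoint_filter_filter h)]

namespace SimpleGraph

variable {V : Type*}

namespace Walk

variable {G : SimpleGraph V}

theorem mem_edges_of_forall_isTrail_length_le {u w : V} {p : G.Walk u w}
    (hmax : ∀ (u' w' : V) (p' : G.Walk u' w'), p'.IsTrail → p'.length ≤ p.length)
    (hp : p.IsTrail) {e : Sym2 V} (he : e ∈ G.edgeSet) (hu : u ∈ e) : e ∈ p.edges := by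
  obtain ⟨z, rfl⟩ := Sym2.mem_iff_exists.mp hu
  by_contra hne
  have := hmax _ _ _ (hp.cons (G.mem_edgeSet.mp he).symm (by rwa [Sym2.eq_swap]))
  simp at this

variable [DecidableEq V]

-- Telescoping: the two consecutive edges through an inner vertex of the walk cancel.
theorem alternatingSum_map_mem_edges (v : V) : ∀ {u w : V} (p : G.Walk u w),
    (p.edges.map fun e => if v ∈ e then 1 else 0).alternatingSum =
      (if v = u then 1 else 0) - (-1) ^ p.length * (if v = w then (1 : ℤ) else 0)
  | _, _, nil => by simp
  | _, _, cons h q => by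
    rw [edges_cons, List.map_cons, List.alternatingSum_cons, alternatingSum_map_mem_edges v q,
      length_cons]
    simp only [Sym2.mem_iff]
    have := h.ne
    split_ifs <;> simp_all <;> ring

theorem IsTrail.two_mul_card_filter_alternate_sub {u w : V} {p : G.Walk u w} (hp : p.IsTrail)
    (v : V) :
    2 * (#{e ∈ p.edges.alternate.toFinset | v ∈ e} : ℤ) - #{e ∈ p.edges.toFinset | v ∈ e} =
      (if v = u then 1 else 0) - (-1) ^ p.length * (if v = w then 1 else 0) := by
  have hnd := hp.edges_nodup
  rw [hnd.card_filter_toFinset, ((List.alternate_sublist _).nodup hnd).card_filter_toFinset,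
    ← alternatingSum_map_mem_edges, ← List.two_mul_countP_alternate_sub_countP]

end Walk

theorem exists_isTrail_forall_mem_edges {G : SimpleGraph V} [Finite G.edgeSet] {e : Sym2 V}
    (he : e ∈ G.edgeSet) :
    ∃ (u w : V) (p : G.Walk u w), p.IsTrail ∧ p.edges ≠ [] ∧
      ∀ e ∈ G.edgeSet, u ∈ e ∨ w ∈ e → e ∈ p.edges := by
  induction e with | _ a b =>
  have : Nonempty V := ⟨a⟩
  obtain ⟨u, w, p, hp, hmax⟩ := Walk.exists_isTrail_forall_isTrail_length_le_length G
  have hmax_rev : ∀ (u' w' : V) (p' : G.Walk u' w'), p'.IsTrail →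
      p'.length ≤ p.reverse.length := by
    simpa using hmax
  refine ⟨u, w, p, hp, ?_, fun e he' hue => ?_⟩
  · have h1 : 1 ≤ p.edges.length :=
      p.length_edges ▸ hmax a b _ (Walk.IsTrail.nil.cons he (by simp))
    exact List.ne_nil_of_length_pos h1
  · rcases hue with hu | hw
    · exact Walk.mem_edges_of_forall_isTrail_length_le hmax hp he' hu
    · simpa using Walk.mem_edges_of_forall_isTrail_length_le hmax_rev (hp.reverse _) he' hw

variable [DecidableEq V]

theorem degree_eq_card_filter_mem (G : SimpleGraph V) [Fintype G.edgeSet] (v : V)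
    [Fintype (G.neighborSet v)] : G.degree v = #{e ∈ G.edgeFinset | v ∈ e} := by
  rw [← card_incidenceFinset_eq_degree, incidenceFinset_eq_filter]

theorem degree_fromEdgeSet_finset (S : Finset (Sym2 V)) (hS : ∀ e ∈ S, ¬e.IsDiag) (v : V)
    [Fintype ((fromEdgeSet (S : Set (Sym2 V))).neighborSet v)] :
    (fromEdgeSet (S : Set (Sym2 V))).degree v = #{e ∈ S | v ∈ e} := by
  rw [← card_incidenceFinset_eq_degree]
  congr 1
  ext e
  simp only [mem_incidenceFinset, incidenceSet, edgeSet_fromEdgeSet, Set.mem_ofPred_eq,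
    Set.mem_sdiff, Finset.mem_coe, mem_filter, Sym2.mem_diagSet]
  exact ⟨fun h => ⟨h.1.1, h.2⟩, fun h => ⟨⟨h.1, hS e h.1⟩, h.2⟩⟩

end SimpleGraph

namespace Finset

variable {V : Type*} [DecidableEq V]

theorem exists_subset_abs_two_mul_card_filter_mem_sub_le (S : Finset (Sym2 V))
    (hS : ∀ e ∈ S, ¬e.IsDiag) :
    ∃ T ⊆ S, ∀ v : V, |2 * (#{e ∈ T | v ∈ e} : ℤ) - #{e ∈ S | v ∈ e}| ≤ 2 := by
  induction S using Finset.strongInduction with | H S ih =>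
  obtain rfl | ⟨e₀, he₀⟩ := S.eq_empty_or_nonempty
  · exact ⟨∅, subset_rfl, by simp⟩
  set G := SimpleGraph.fromEdgeSet (S : Set (Sym2 V))
  have hG : G.edgeSet = S := by
    rw [SimpleGraph.edgeSet_fromEdgeSet, sdiff_eq_left]
    exact Set.disjoint_left.mpr fun e he => hS e he
  have : Finite G.edgeSet := hG ▸ S.finite_toSet
  obtain ⟨u, w, p, hp, hne, hsat⟩ :=
    SimpleGraph.exists_isTrail_forall_mem_edges (G := G) (hG ▸ he₀ : e₀ ∈ G.edgeSet)
  set P := p.edges.toFinset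
  have hPS : P ⊆ S := fun e he => by
    simpa [hG] using p.edges_subset_edgeSet (List.mem_toFinset.mp he)
  obtain ⟨T', hT'S, hT'⟩ := ih (S \ P) (sdiff_ssubset hPS (List.toFinset_nonempty_iff _ |>.mpr hne))
    fun e he => hS e (mem_sdiff.mp he).1
  set A := p.edges.alternate.toFinset
  have hAP : A ⊆ P := fun e he => by
    simpa [A, P] using (List.alternate_sublist _).subset (List.mem_toFinset.mp he)
  refine ⟨T' ∪ A, union_subset (hT'S.trans sdiff_subset) (hAP.trans hPS), fun v => ?_⟩
  rw [card_filter_union_of_disjoint (sdiff_disjoint.mono hT'S hAP), ← sdiff_union_of_subset hPS,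
    card_filter_union_of_disjoint sdiff_disjoint]
  have htrail : 2 * (#{e ∈ A | v ∈ e} : ℤ) - #{e ∈ P | v ∈ e} = _ :=
    hp.two_mul_card_filter_alternate_sub v
  push_cast
  by_cases hv : v = u ∨ v = w
  · have hSP : #{e ∈ S \ P | v ∈ e} = 0 := by
      refine card_eq_zero.mpr (filter_eq_empty_iff.mpr fun e he hve => (mem_sdiff.mp he).2 ?_)
      refine List.mem_toFinset.mpr (hsat e (hG ▸ (mem_sdiff.mp he).1) ?_)
      rcases hv with rfl | rfl <;> simp [hve]
    have hT' : #{e ∈ T' | v ∈ e} = 0 :=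
      Nat.eq_zero_of_le_zero (hSP ▸ card_le_card (filter_subset_filter _ hT'S))
    have hD : |2 * (#{e ∈ A | v ∈ e} : ℤ) - #{e ∈ P | v ∈ e}| ≤ 2 := by
      rw [htrail]
      rcases neg_one_pow_eq_or ℤ p.length with h | h <;> rw [h] <;> split_ifs <;> norm_num
    simpa [hSP, hT'] using hD
  · simp only [not_or] at hv
    rw [if_neg hv.1, if_neg hv.2] at htrail
    have := hT' v
    rw [abs_le] at this ⊢
    constructor <;> linarith

theorem exists_subset_abs_two_pow_mul_card_filter_mem_sub_le (k : ℕ) (S : Finset (Sym2 V))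
    (hS : ∀ e ∈ S, ¬e.IsDiag) :
    ∃ T ⊆ S, ∀ v : V, |2 ^ k * (#{e ∈ T | v ∈ e} : ℤ) - #{e ∈ S | v ∈ e}| ≤ 2 * (2 ^ k - 1) := by
  induction k with
  | zero => exact ⟨S, subset_rfl, by simp⟩
  | succ k ih =>
    obtain ⟨T, hTS, hT⟩ := ih
    obtain ⟨R, hRT, hR⟩ :=
      exists_subset_abs_two_mul_card_filter_mem_sub_le T fun e he => hS e (hTS he)
    refine ⟨R, hRT.trans hTS, fun v => ?_⟩
    calc |2 ^ (k + 1) * (#{e ∈ R | v ∈ e} : ℤ) - #{e ∈ S | v ∈ e}|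
        = |2 ^ k * (2 * (#{e ∈ R | v ∈ e} : ℤ) - #{e ∈ T | v ∈ e}) +
            (2 ^ k * (#{e ∈ T | v ∈ e} : ℤ) - #{e ∈ S | v ∈ e})| := by ring_nf
      _ ≤ 2 ^ k * 2 + 2 * (2 ^ k - 1) := by
        refine (abs_add_le _ _).trans (add_le_add ?_ (hT v))
        rw [abs_mul, abs_of_pos (by positivity)]
        exact mul_le_mul_of_nonneg_left (hR v) (by positivity)
      _ = 2 * (2 ^ (k + 1) - 1) := by ring

end Finset

open SimpleGraph

open scoped Classical

theorem stmt_1 {V : Type*} [Fintype V] (G1 : SimpleGraph V) :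
    ∃ G1' : SimpleGraph V, G1' ≤ G1 ∧
      ∀ v : V, (9 / 16 : ℝ) * (G1.degree v : ℝ) - 3 ≤ (G1'.degree v : ℝ) ∧
        (G1'.degree v : ℝ) ≤ (9 / 16 : ℝ) * (G1.degree v : ℝ) + 3 := by
  set S := G1.edgeFinset
  have hS : ∀ e ∈ S, ¬e.IsDiag := fun e he => G1.not_isDiag_of_mem_edgeSet (mem_edgeFinset.mp he)
  obtain ⟨T₁, hT₁S, h₁⟩ := exists_subset_abs_two_mul_card_filter_mem_sub_le S hS
  obtain ⟨T₄, hT₄T₁, h₄⟩ :=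
    exists_subset_abs_two_pow_mul_card_filter_mem_sub_le 3 T₁ fun e he => hS e (hT₁S he)
  have hRS : S \ T₁ ∪ T₄ ⊆ S := union_subset sdiff_subset (hT₄T₁.trans hT₁S)
  refine ⟨fromEdgeSet ↑(S \ T₁ ∪ T₄), (fromEdgeSet_le G1).mpr fun e he => ?_, fun v => ?_⟩
  · exact mem_edgeFinset.mp (hRS he.1)
  rw [degree_fromEdgeSet_finset _ (fun e he => hS e (hRS he)),
    card_filter_union_of_disjoint (sdiff_disjoint.mono_right hT₄T₁), degree_eq_card_filter_mem]
  have hsplit : (#{e ∈ S | v ∈ e} : ℝ) = #{e ∈ S \ T₁ | v ∈ e} + #{e ∈ T₁ | v ∈ e} := by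
    rw [← Nat.cast_add, ← card_filter_union_of_disjoint sdiff_disjoint,
      sdiff_union_of_subset hT₁S]
  have h₁' : |2 * (#{e ∈ T₁ | v ∈ e} : ℝ) - #{e ∈ S | v ∈ e}| ≤ 2 := by exact_mod_cast h₁ v
  have h₄' : |2 ^ 3 * (#{e ∈ T₄ | v ∈ e} : ℝ) - #{e ∈ T₁ | v ∈ e}| ≤ 2 * (2 ^ 3 - 1) := by
    exact_mod_cast h₄ v
  rw [abs_le] at h₁' h₄'
  push_cast
  constructor <;> linarith
end

section
/- Let G be a d-regular graph with d ≥ 10^8. Then there exists a subset V0 ⊆ V(G) such that every vertex v of G satisfies |d_{V0}(v) − 0.05·d| ≤ 3·10^{−4}·d, where d_{V0}(v) is the number of neighbors of v in V0. -/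
/-!
Colour every vertex uniformly at random with one of 20 colours and take `V0` to be colour
class `0`. By the exponential-moment (Chernoff) bound, a vertex has an unbalanced number of
neighbours in `V0` with probability at most `2 c⁻ᵈ`, where `c = 1 + 88 · 10⁻⁸`. This event is
determined by the colours of the neighbours of `v`, hence is mutually independent of the events
at all vertices sharing no neighbour with `v`, leaving at most `d²` dependencies. As
`8 d² ≤ cᵈ` for `d ≥ 10⁸`, the symmetric Lovász Local Lemma (`4 p D ≤ 1`) produces a colouring
with no unbalanced vertex. Probabilities are counted as cardinalities of sets of colourings.
-/

open Finset

namespace LocalLemma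

variable {Ω ι : Type*} [Fintype Ω] [DecidableEq Ω] (A : ι → Finset Ω)

def avoid (S : Finset ι) : Finset Ω :=
  univ.filter fun ω => ∀ j ∈ S, ω ∉ A j

lemma mem_avoid {S : Finset ι} {ω : Ω} : ω ∈ avoid A S ↔ ∀ j ∈ S, ω ∉ A j := by
  simp [avoid]

lemma avoid_empty : avoid A ∅ = univ := by
  simp [avoid]

lemma avoid_anti {S T : Finset ι} (h : S ⊆ T) : avoid A T ⊆ avoid A S :=
  monotone_filter_right _ fun _ _ hω j hj => hω j (h hj)

variable [DecidableEq ι]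

lemma avoid_insert (j : ι) (S : Finset ι) : avoid A (insert j S) = avoid A S \ A j := by
  ext ω
  simp [avoid, and_comm]

lemma card_avoid_insert (j : ι) (S : Finset ι) :
    (#(avoid A (insert j S)) : ℝ) = #(avoid A S) - #(avoid A S ∩ A j) := by
  rw [avoid_insert, eq_sub_iff_add_eq]
  exact_mod_cast card_sdiff_add_card_inter _ _

-- Each event of `T` avoided costs a factor `1 - q`, by the conditional bound below `S`.
lemma pow_mul_card_avoid_le {q : ℝ} (hq : q ≤ 1) {S : Finset ι}
    (hS : ∀ U ⊂ S, ∀ j, (#(avoid A U ∩ A j) : ℝ) ≤ q * #(avoid A U))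
    {R T : Finset ι} (hRT : Disjoint R T) (hsub : R ∪ T ⊆ S) :
    (1 - q) ^ #T * #(avoid A R) ≤ #(avoid A (R ∪ T)) := by
  induction T using Finset.induction_on with
  | empty => simp
  | @insert j T hjT ih =>
    rw [disjoint_insert_right] at hRT
    have hjRT : j ∉ R ∪ T := by simp [hjT, hRT.1]
    have hssub : R ∪ T ⊂ S :=
      (ssubset_iff_of_subset ((union_subset_union_right (subset_insert j T)).trans hsub)).2
        ⟨j, hsub (by simp), hjRT⟩
    rw [card_insert_of_notMem hjT, union_insert, card_avoid_insert, pow_succ]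
    have := ih hRT.2 hssub.subset
    have := hS _ hssub j
    nlinarith

variable {A} {Γ : ι → Finset ι} {p q : ℝ} {D : ℕ}

lemma card_avoid_inter_le (hq0 : 0 ≤ q) (hq1 : q ≤ 1) (hpq : p ≤ q * (1 - q) ^ D)
    (hΓ : ∀ i, #(Γ i) ≤ D)
    (hA : ∀ i S, Disjoint S (Γ i) → (#(avoid A S ∩ A i) : ℝ) ≤ p * #(avoid A S))
    (S : Finset ι) (i : ι) : (#(avoid A S ∩ A i) : ℝ) ≤ q * #(avoid A S) := by
  induction S using Finset.strongInduction generalizing i with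
  | H S ih =>
  have hsplit := pow_mul_card_avoid_le A hq1 ih (disjoint_sdiff_inter S (Γ i))
    (sdiff_union_inter S (Γ i)).subset
  rw [sdiff_union_inter] at hsplit
  have hpow : (1 - q) ^ D ≤ (1 - q) ^ #(S ∩ Γ i) :=
    pow_le_pow_of_le_one (by linarith) (by linarith)
      ((card_le_card inter_subset_right).trans (hΓ i))
  calc (#(avoid A S ∩ A i) : ℝ)
      ≤ #(avoid A (S \ Γ i) ∩ A i) := by
        gcongr; exact avoid_anti A sdiff_subset
    _ ≤ p * #(avoid A (S \ Γ i)) := hA i _ sdiff_disjoint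
    _ ≤ q * ((1 - q) ^ #(S ∩ Γ i) * #(avoid A (S \ Γ i))) := by
        rw [← mul_assoc]; gcongr; exact hpq.trans (by gcongr)
    _ ≤ q * #(avoid A S) := by gcongr

theorem exists_forall_notMem [Fintype ι] [Nonempty Ω] (hq0 : 0 ≤ q) (hq1 : q < 1)
    (hpq : p ≤ q * (1 - q) ^ D) (hΓ : ∀ i, #(Γ i) ≤ D)
    (hA : ∀ i S, Disjoint S (Γ i) → (#(avoid A S ∩ A i) : ℝ) ≤ p * #(avoid A S)) :
    ∃ ω, ∀ i, ω ∉ A i := by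
  have hbound := pow_mul_card_avoid_le A hq1.le
    (fun U _ j => card_avoid_inter_le hq0 hq1.le hpq hΓ hA U j)
    (disjoint_empty_left univ) (empty_union univ).subset
  rw [empty_union, avoid_empty, card_univ] at hbound
  have hpos : (0 : ℝ) < #(avoid A univ) :=
    lt_of_lt_of_le (by have := Fintype.card_pos (α := Ω); positivity) hbound
  obtain ⟨ω, hω⟩ := card_pos.mp (by exact_mod_cast hpos)
  exact ⟨ω, fun i => (mem_avoid A).mp hω i (mem_univ i)⟩

/-- The symmetric local lemma of Erdős and Lovász. -/
theorem exists_forall_notMem_of_four_mul_le [Fintype ι] [Nonempty Ω] (hD : 1 ≤ D)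
    (hpD : 4 * p * D ≤ 1) (hΓ : ∀ i, #(Γ i) ≤ D)
    (hA : ∀ i S, Disjoint S (Γ i) → (#(avoid A S ∩ A i) : ℝ) ≤ p * #(avoid A S)) :
    ∃ ω, ∀ i, ω ∉ A i := by
  have hD' : (1 : ℝ) ≤ D := by exact_mod_cast hD
  have hbernoulli : 1 / 2 ≤ (1 - 1 / (2 * D) : ℝ) ^ D := by
    have := one_add_mul_le_pow (a := -(1 / (2 * D) : ℝ)) (by
      have : 1 / (2 * D) ≤ (1 : ℝ) := by rw [div_le_one (by positivity)]; linarith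
      linarith) D
    rw [← sub_eq_add_neg] at this
    refine le_trans ?_ this
    field_simp
    linarith
  refine exists_forall_notMem (q := 1 / (2 * D)) (by positivity) ?_ ?_ hΓ hA
  · rw [div_lt_one (by positivity)]; linarith
  · calc p ≤ 1 / (2 * D) * (1 / 2) := by field_simp; linarith
      _ ≤ _ := by gcongr

end LocalLemma

lemma pow_le_pow_of_pow_le_pow {a t : ℝ} (ha : 0 ≤ a) (ht : 0 ≤ t) {N e n m : ℕ} (hN : N ≠ 0)
    (h : a ^ N ≤ t ^ e) (hexp : t ^ (e * n) ≤ t ^ (N * m)) : a ^ n ≤ t ^ m := by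
  refine (pow_le_pow_iff_left₀ (by positivity) (by positivity) hN).mp ?_
  calc (a ^ n) ^ N = (a ^ N) ^ n := by rw [← pow_mul, ← pow_mul, mul_comm]
    _ ≤ (t ^ e) ^ n := by gcongr
    _ ≤ (t ^ m) ^ N := by rwa [← pow_mul, ← pow_mul, mul_comm m]

lemma div_pow_le_div_pow_of_nat {a b c e N M : ℕ} (hb : 0 < b) (he : 0 < e)
    (h : a ^ N * e ^ M ≤ c ^ M * b ^ N) : ((a : ℝ) / b) ^ N ≤ ((c : ℝ) / e) ^ M := by
  rw [div_pow, div_pow, div_le_div_iff₀ (by positivity) (by positivity)]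
  exact_mod_cast h

section Coloring

variable {V α : Type*} [Fintype V] [DecidableEq V] [Fintype α] [DecidableEq α]

theorem card_inter_mul_card_eq (s : Finset V) (X Y : Finset (V → α))
    (hX : ∀ f g : V → α, (∀ x ∈ s, f x = g x) → (f ∈ X ↔ g ∈ X))
    (hY : ∀ f g : V → α, (∀ x ∉ s, f x = g x) → (f ∈ Y ↔ g ∈ Y)) :
    #(X ∩ Y) * Fintype.card (V → α) = #X * #Y := by
  let e := Equiv.piEquivPiSubtypeProd (· ∈ s) (fun _ => α)
  have card_prod (R : (s → α) → Prop) (R' : ({x // x ∉ s} → α) → Prop)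
      [DecidablePred R] [DecidablePred R'] :
      #{f | R (e f).1 ∧ R' (e f).2} = #{a | R a} * #{b | R' b} := by
    rw [← card_product]
    exact card_equiv e fun f => by simp
  have hXe : ∀ f, f ∈ X ↔ ∃ b, e.symm ((e f).1, b) ∈ X := fun f =>
    ⟨fun h => ⟨(e f).2, by simpa using h⟩, fun ⟨b, hb⟩ =>
      (hX _ _ fun x hx => by simp [e, hx]).1 hb⟩
  have hYe : ∀ f, f ∈ Y ↔ ∃ a, e.symm (a, (e f).2) ∈ Y := fun f =>
    ⟨fun h => ⟨(e f).1, by simpa using h⟩, fun ⟨a, ha⟩ =>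
      (hY _ _ fun x hx => by simp [e, hx]).1 ha⟩
  have hΩ := card_prod (fun _ => True) (fun _ => True)
  have hX' := card_prod (fun a => ∃ b, e.symm (a, b) ∈ X) (fun _ => True)
  have hY' := card_prod (fun _ => True) (fun b => ∃ a, e.symm (a, b) ∈ Y)
  have hXY := card_prod (fun a => ∃ b, e.symm (a, b) ∈ X) (fun b => ∃ a, e.symm (a, b) ∈ Y)
  simp only [and_true, true_and, filter_true, card_univ] at hΩ hX' hY'
  simp only [← hXe, ← hYe, ← mem_inter, filter_univ_mem] at hΩ hX' hY' hXY
  rw [hXY, hX', hY', hΩ]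
  ring

lemma sum_pow_card_filter_eq (s : Finset V) (c : α) (t : ℝ) :
    ∑ f : V → α, t ^ #{u ∈ s | f u = c} =
      (Fintype.card α + t - 1) ^ #s * (Fintype.card α : ℝ) ^ #sᶜ := by
  have hcolor : ∑ a : α, (if a = c then t else 1) = (Fintype.card α + t - 1 : ℝ) := by
    have h (a : α) : (if a = c then t else 1) = 1 + (if a = c then t - 1 else 0) := by
      split_ifs <;> ring
    simp only [h, sum_add_distrib, sum_ite_eq', mem_univ, if_true, sum_const, card_univ,
      nsmul_eq_mul, mul_one]
    ring
  calc ∑ f : V → α, t ^ #{u ∈ s | f u = c}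
      = ∑ f : V → α, ∏ u, (if u ∈ s then (if f u = c then t else 1) else 1) := by
        refine sum_congr rfl fun f _ => ?_
        rw [Fintype.prod_ite_mem, ← prod_filter, prod_const]
    _ = ∏ u : V, ∑ a : α, (if u ∈ s then (if a = c then t else 1) else 1) :=
        (Fintype.prod_sum (fun u (a : α) => if u ∈ s then (if a = c then t else 1) else 1)).symm
    _ = ∏ u : V, (if u ∈ s then (Fintype.card α + t - 1 : ℝ) else Fintype.card α) := by
        refine prod_congr rfl fun u _ => ?_
        split_ifs <;> simp [hcolor]
    _ = _ := by
        rw [prod_ite, prod_const, prod_const, filter_mem_eq_inter, univ_inter]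
        congr
        ext u; simp

theorem card_mul_pow_le (s : Finset V) (c : α) {t : ℝ} (ht : 0 ≤ t) {m : ℕ}
    (T : Finset (V → α)) (hT : ∀ f ∈ T, t ^ m ≤ t ^ #{u ∈ s | f u = c}) :
    #T * t ^ m ≤ (Fintype.card α + t - 1) ^ #s * (Fintype.card α : ℝ) ^ #sᶜ := by
  rw [← sum_pow_card_filter_eq, ← nsmul_eq_mul]
  exact (card_nsmul_le_sum T _ _ hT).trans
    (sum_le_sum_of_subset_of_nonneg (subset_univ T) fun _ _ _ => by positivity)

variable (s : Finset V)

lemma card_mul_pow_le_of_pow_le {t b : ℝ} (ht : 0 < t) (hb : 0 ≤ b) {m : ℕ}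
    (T : Finset (V → Fin 20)) (hT : ∀ f ∈ T, t ^ m ≤ t ^ #{u ∈ s | f u = 0})
    (hroot : ((19 + t) / 20 * b) ^ #s ≤ t ^ m) :
    #T * b ^ #s ≤ (20 : ℝ) ^ Fintype.card V := by
  have hchernoff := card_mul_pow_le s 0 ht.le T hT
  rw [Fintype.card_fin, show ((20 : ℕ) : ℝ) + t - 1 = 19 + t by push_cast; ring] at hchernoff
  refine le_of_mul_le_mul_right ?_ (pow_pos ht m)
  calc #T * b ^ #s * t ^ m = #T * t ^ m * b ^ #s := by ring
    _ ≤ (19 + t) ^ #s * (20 : ℝ) ^ #sᶜ * b ^ #s :=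
        mul_le_mul_of_nonneg_right hchernoff (by positivity)
    _ = ((19 + t) / 20 * b) ^ #s * (20 : ℝ) ^ (#s + #sᶜ) := by
        rw [mul_pow, div_pow, pow_add]; field_simp
    _ ≤ t ^ m * (20 : ℝ) ^ (#s + #sᶜ) := by gcongr
    _ = (20 : ℝ) ^ Fintype.card V * t ^ m := by rw [card_add_card_compl, mul_comm]

lemma card_upper_tail_mul_le :
    (#{f : V → Fin 20 | 503 * #s < 10000 * #{u ∈ s | f u = 0}} : ℝ) *
      (100000088 / 10 ^ 8) ^ #s ≤ (20 : ℝ) ^ Fintype.card V := by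
  -- `t = 1.0063` is near the optimal Chernoff parameter; the 10000-th power clears the
  -- fractional exponent `503 / 10000`.
  have hcert : ((19 + 10063 / 10 ^ 4) / 20 * (100000088 / 10 ^ 8) : ℝ) ^ 10000 ≤
      (10063 / 10 ^ 4 : ℝ) ^ 503 := by
    convert div_pow_le_div_pow_of_nat (a := 20006317605544) (b := 20000000000000) (c := 10063)
      (e := 10000) (N := 10000) (M := 503) (by norm_num) (by norm_num) (by decide +kernel)
      using 2 <;> norm_num
  refine card_mul_pow_le_of_pow_le s (t := 10063 / 10 ^ 4) (m := 503 * #s / 10000 + 1)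
    (by norm_num) (by norm_num) _
    (fun f hf => pow_le_pow_right₀ (by norm_num) (by simp at hf; omega)) ?_
  exact pow_le_pow_of_pow_le_pow (by positivity) (by positivity) (by norm_num) hcert
    (pow_le_pow_right₀ (by norm_num) (by omega))

lemma card_lower_tail_mul_le :
    (#{f : V → Fin 20 | 10000 * #{u ∈ s | f u = 0} < 497 * #s} : ℝ) *
      (100000088 / 10 ^ 8) ^ #s ≤ (20 : ℝ) ^ Fintype.card V := by
  have hcert : ((19 + 9937 / 10 ^ 4) / 20 * (100000088 / 10 ^ 8) : ℝ) ^ 10000 ≤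
      (9937 / 10 ^ 4 : ℝ) ^ 497 := by
    convert div_pow_le_div_pow_of_nat (a := 19993717594456) (b := 20000000000000) (c := 9937)
      (e := 10000) (N := 10000) (M := 497) (by norm_num) (by norm_num) (by decide +kernel)
      using 2 <;> norm_num
  refine card_mul_pow_le_of_pow_le s (t := 9937 / 10 ^ 4) (m := 497 * #s / 10000)
    (by norm_num) (by norm_num) _ (fun f hf => pow_le_pow_of_le_one (by norm_num) (by norm_num)
      (by simp at hf; omega)) ?_
  exact pow_le_pow_of_pow_le_pow (by positivity) (by positivity) (by norm_num) hcert
    (pow_le_pow_of_le_one (by norm_num) (by norm_num) (by omega))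

noncomputable def unbalanced (s : Finset V) : Finset (V → Fin 20) :=
  {f | ¬ |(#{u ∈ s | f u = 0} : ℝ) - 0.05 * #s| ≤ 3 * 10 ^ (-4 : ℤ) * #s}

lemma mem_unbalanced_congr {f g : V → Fin 20} (hfg : ∀ x ∈ s, f x = g x) :
    f ∈ unbalanced s ↔ g ∈ unbalanced s := by
  have hcount : {u ∈ s | f u = 0} = {u ∈ s | g u = 0} := filter_congr fun x hx => by rw [hfg x hx]
  simp only [unbalanced, mem_filter, mem_univ, true_and, hcount]

lemma card_unbalanced_mul_le :
    (#(unbalanced s) : ℝ) * (100000088 / 10 ^ 8) ^ #s ≤ 2 * 20 ^ Fintype.card V := by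
  set U : Finset (V → Fin 20) := {f | 503 * #s < 10000 * #{u ∈ s | f u = 0}}
  set L : Finset (V → Fin 20) := {f | 10000 * #{u ∈ s | f u = 0} < 497 * #s}
  have hsub : unbalanced s ⊆ U ∪ L := by
    intro f hf
    simp only [unbalanced, U, L, mem_filter, mem_univ, true_and, mem_union] at hf ⊢
    by_contra! h
    have h1 : (10000 * #{u ∈ s | f u = 0} : ℝ) ≤ 503 * #s := by exact_mod_cast h.1
    have h2 : (497 * #s : ℝ) ≤ 10000 * #{u ∈ s | f u = 0} := by exact_mod_cast h.2
    refine hf (abs_le.mpr ⟨?_, ?_⟩) <;> norm_num <;> linarith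
  have hcard : (#(unbalanced s) : ℝ) ≤ #U + #L := by
    exact_mod_cast (card_le_card hsub).trans (card_union_le U L)
  have hU := card_upper_tail_mul_le s
  have hL := card_lower_tail_mul_le s
  calc (#(unbalanced s) : ℝ) * (100000088 / 10 ^ 8) ^ #s
      ≤ (#U + #L : ℝ) * (100000088 / 10 ^ 8) ^ #s := by gcongr
    _ ≤ 2 * 20 ^ Fintype.card V := by linarith

end Coloring

theorem eight_mul_sq_le_pow {d : ℕ} (hd : 10 ^ 8 ≤ d) :
    8 * (d : ℝ) ^ 2 ≤ (100000088 / 10 ^ 8 : ℝ) ^ d := by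
  have hdR : (10 : ℝ) ^ 8 ≤ d := by exact_mod_cast hd
  have hlog : d * (88 / 100000088) ≤ Real.log ((100000088 / 10 ^ 8 : ℝ) ^ d) := by
    rw [Real.log_pow]
    gcongr
    exact le_of_eq_of_le (by norm_num) (Real.one_sub_inv_le_log_of_pos (by norm_num))
  have hfact : (Nat.factorial 20 : ℝ) * 8 ≤ (88 / 100000088) ^ 20 * ((10 : ℝ) ^ 8) ^ 18 := by
    norm_num [Nat.factorial]
  have hd18 : ((10 : ℝ) ^ 8) ^ 18 ≤ (d : ℝ) ^ 18 := by gcongr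
  have hpoly : (Nat.factorial 20 : ℝ) * (8 * (d : ℝ) ^ 2) ≤ (d * (88 / 100000088)) ^ 20 := by
    calc (Nat.factorial 20 : ℝ) * (8 * (d : ℝ) ^ 2)
        ≤ (88 / 100000088) ^ 20 * ((10 : ℝ) ^ 8) ^ 18 * (d : ℝ) ^ 2 := by nlinarith
      _ ≤ (88 / 100000088) ^ 20 * (d : ℝ) ^ 18 * (d : ℝ) ^ 2 := by gcongr
      _ = _ := by ring
  calc 8 * (d : ℝ) ^ 2 ≤ (d * (88 / 100000088)) ^ 20 / (Nat.factorial 20 : ℝ) := by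
        rw [le_div_iff₀ (by positivity)]; linarith
    _ ≤ Real.exp (d * (88 / 100000088)) := Real.pow_div_factorial_le_exp _ (by positivity) 20
    _ ≤ (100000088 / 10 ^ 8 : ℝ) ^ d := by
        rwa [← Real.exp_le_exp, Real.exp_log (by positivity)] at hlog

namespace SimpleGraph

open LocalLemma

variable {V : Type*} [Fintype V] [DecidableEq V] (G : SimpleGraph V) [DecidableRel G.Adj]

def twoStepNeighborFinset (v : V) : Finset V :=
  (G.neighborFinset v).biUnion fun u => G.neighborFinset u

lemma mem_twoStepNeighborFinset {v w : V} :
    w ∈ G.twoStepNeighborFinset v ↔ ∃ u, G.Adj v u ∧ G.Adj u w := by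
  simp [twoStepNeighborFinset]

lemma card_twoStepNeighborFinset_le {d : ℕ} (hreg : G.IsRegularOfDegree d) (v : V) :
    #(G.twoStepNeighborFinset v) ≤ d * d := by
  refine (card_biUnion_le_card_mul _ _ d fun u _ => ?_).trans_eq ?_
  · rw [card_neighborFinset_eq_degree, hreg u]
  · rw [card_neighborFinset_eq_degree, hreg v]

lemma card_avoid_inter_unbalanced_le {d : ℕ} (hreg : G.IsRegularOfDegree d) (v : V)
    (S : Finset V) (hS : Disjoint S (G.twoStepNeighborFinset v)) :
    (#(avoid (fun w => unbalanced (G.neighborFinset w)) S ∩ unbalanced (G.neighborFinset v)) : ℝ)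
      ≤ 2 / (100000088 / 10 ^ 8) ^ d * #(avoid (fun w => unbalanced (G.neighborFinset w)) S) := by
  set A := fun w => unbalanced (G.neighborFinset w)
  have hind := card_inter_mul_card_eq (G.neighborFinset v) (A v) (avoid A S)
    (fun f g => mem_unbalanced_congr _) (by
      intro f g hfg
      simp only [mem_avoid]
      refine forall₂_congr fun w hw => not_congr (mem_unbalanced_congr _ fun x hx => hfg x ?_)
      intro hxv
      exact Finset.disjoint_left.mp hS hw ((G.mem_twoStepNeighborFinset).mpr
        ⟨x, (G.mem_neighborFinset _ _).mp hxv, ((G.mem_neighborFinset _ _).mp hx).symm⟩))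
  have hcard := card_unbalanced_mul_le (G.neighborFinset v)
  rw [card_neighborFinset_eq_degree, hreg v] at hcard
  rw [inter_comm, Fintype.card_fun, Fintype.card_fin] at hind
  have hind' : (#(avoid A S ∩ A v) : ℝ) * 20 ^ Fintype.card V = #(A v) * #(avoid A S) := by
    exact_mod_cast hind
  rw [div_mul_eq_mul_div, le_div_iff₀ (by positivity)]
  refine le_of_mul_le_mul_right ?_ (by positivity : (0 : ℝ) < 20 ^ Fintype.card V)
  calc (#(avoid A S ∩ A v) : ℝ) * (100000088 / 10 ^ 8) ^ d * (20 : ℝ) ^ Fintype.card V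
      = #(A v) * (100000088 / 10 ^ 8) ^ d * #(avoid A S) := by rw [mul_right_comm, hind']; ring
    _ ≤ 2 * (20 : ℝ) ^ Fintype.card V * #(avoid A S) := by gcongr
    _ = 2 * #(avoid A S) * (20 : ℝ) ^ Fintype.card V := by ring

end SimpleGraph

open scoped Classical in
theorem stmt_9 {V : Type*} [Fintype V] (G : SimpleGraph V) (d : ℕ) (hd : 10 ^ 8 ≤ d)
    (hreg : G.IsRegularOfDegree d) :
    ∃ V0 : Finset V, ∀ v : V,
      |((G.neighborFinset v ∩ V0).card : ℝ) - 0.05 * d| ≤ 3 * 10 ^ (-4 : ℤ) * d := by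
  have hd1 : 1 ≤ d * d := by nlinarith
  have hpD : 4 * (2 / (100000088 / 10 ^ 8 : ℝ) ^ d) * (d * d : ℕ) ≤ 1 := by
    rw [show (4 : ℝ) * (2 / (100000088 / 10 ^ 8) ^ d) * (d * d : ℕ) =
      8 * d ^ 2 / (100000088 / 10 ^ 8) ^ d by push_cast; ring, div_le_one (by positivity)]
    exact eight_mul_sq_le_pow hd
  obtain ⟨f, hf⟩ := LocalLemma.exists_forall_notMem_of_four_mul_le hd1 hpD
    (G.card_twoStepNeighborFinset_le hreg) (G.card_avoid_inter_unbalanced_le hreg)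
  refine ⟨({u | f u = 0} : Finset V), fun v => ?_⟩
  have hv := hf v
  simp only [unbalanced, mem_filter, mem_univ, true_and, not_not,
    G.card_neighborFinset_eq_degree, hreg v] at hv
  convert hv using 5
  ext u
  simp
end

section
/- Let G = (V,E) be a graph and suppose each vertex v is assigned a finite set E_v of edges incident with v, the sets E_v being pairwise disjoint. Suppose ω : E → {1,2,3} is an edge weighting with ω(e) = 2 for all e ∈ ⋃_v E_v, and suppose for every vertex v we have |E_v| + 1 > 2·k_v, where k_v is the number of neighbors u of v lying in a prescribed class containing v. Then, processing the vertices in any fixed order, one can assign to each vertex v a two-element set S_v = {2i_v, 2i_v+1} with i_v ∈ ℤ, distinct from the sets S_u of all already-processed same-class neighbors u of v, and modify only weights of edges in E_v (changing each by at most 1, staying in {1,2,3}) so that at the end σ(v) ∈ S_v for every vertex v; in particular σ(u) ≠ σ(v) for adjacent same-class vertices u, v. -/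
open scoped Classical

/-- Block selection: among achievable shifts `d ∈ [-a, b]` with `a + b ≥ 2k`,
some value `s + d` lies in a block `{2i, 2i+1}` whose index avoids `F` (|F| ≤ k). -/
lemma exists_block_aux (s : ℤ) (a b k : ℕ) (F : Finset ℤ) (hF : F.card ≤ k)
    (hab : 2 * k ≤ a + b) :
    ∃ d : ℤ, -(a : ℤ) ≤ d ∧ d ≤ b ∧ (s + d) / 2 ∉ F := by
  set B := (Finset.range (k + 1)).image (fun j : ℕ => (s - a) / 2 + (j : ℤ)) with hB
  have hBcard : B.card = k + 1 := by
    rw [hB, Finset.card_image_of_injOn, Finset.card_range]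
    intro x _ y _ h
    have : (x : ℤ) = y := add_left_cancel h
    exact_mod_cast this
  have hex : ∃ i ∈ B, i ∉ F := by
    by_contra h
    push_neg at h
    have := Finset.card_le_card (fun i hi => h i hi)
    omega
  obtain ⟨i, hiB, hiF⟩ := hex
  rw [hB, Finset.mem_image] at hiB
  obtain ⟨j, hj, rfl⟩ := hiB
  rw [Finset.mem_range] at hj
  refine ⟨2 * (j : ℤ) - a, by omega, by omega, ?_⟩
  have : s + (2 * (j : ℤ) - a) = (s - a) + 2 * j := by ring
  rw [this, Int.add_mul_ediv_left _ _ (by norm_num)]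
  exact hiF

theorem stmt_10 {V : Type*} [Fintype V] (G : SimpleGraph V)
    (Ev : V → Finset (Sym2 V))
    (hEv : ∀ v, ∀ e ∈ Ev v, e ∈ G.edgeSet ∧ v ∈ e)
    (hdisj : ∀ u v : V, u ≠ v → Disjoint (Ev u) (Ev v))
    (c : V → ℕ)  -- partition of the vertex set into classes
    (ω : Sym2 V → ℕ)
    (hω : ∀ e ∈ G.edgeSet, ω e ∈ ({1, 2, 3} : Set ℕ))
    (hω2 : ∀ v, ∀ e ∈ Ev v, ω e = 2)
    (hsize : ∀ v : V, (Ev v).card + 1 >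
      2 * ((G.neighborFinset v).filter (fun u => c u = c v)).card) :
    ∃ (ω' : Sym2 V → ℕ) (i : V → ℤ),
      (∀ e, (∀ v, e ∉ Ev v) → ω' e = ω e) ∧
      (∀ e ∈ G.edgeSet, ω' e ∈ ({1, 2, 3} : Set ℕ)) ∧
      (∀ e ∈ G.edgeSet, (ω' e : ℤ) - (ω e : ℤ) ≤ 1 ∧ (ω e : ℤ) - (ω' e : ℤ) ≤ 1) ∧
      (∀ v : V, ((∑ u ∈ G.neighborFinset v, ω' s(v, u) : ℕ) : ℤ) = 2 * i v ∨
        ((∑ u ∈ G.neighborFinset v, ω' s(v, u) : ℕ) : ℤ) = 2 * i v + 1) ∧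
      (∀ u v : V, G.Adj u v → c u = c v → i u ≠ i v) ∧
      (∀ u v : V, G.Adj u v → c u = c v →
        (∑ x ∈ G.neighborFinset u, ω' s(u, x)) ≠ (∑ x ∈ G.neighborFinset v, ω' s(v, x))) := by
  -- Main induction: process a finite set D of vertices.
  have main : ∀ D : Finset V, ∃ (ω' : Sym2 V → ℕ) (i : V → ℤ),
      (∀ e, (∀ v ∈ D, e ∉ Ev v) → ω' e = ω e) ∧
      (∀ e ∈ G.edgeSet, ω' e ∈ ({1, 2, 3} : Set ℕ)) ∧
      (∀ e ∈ G.edgeSet, (ω' e : ℤ) - (ω e : ℤ) ≤ 1 ∧ (ω e : ℤ) - (ω' e : ℤ) ≤ 1) ∧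
      (∀ v ∈ D, ((∑ u ∈ G.neighborFinset v, ω' s(v, u) : ℕ) : ℤ) = 2 * i v ∨
        ((∑ u ∈ G.neighborFinset v, ω' s(v, u) : ℕ) : ℤ) = 2 * i v + 1) ∧
      (∀ u ∈ D, ∀ v ∈ D, G.Adj u v → c u = c v → i u ≠ i v) := by
    intro D
    induction D using Finset.induction_on with
    | empty =>
      refine ⟨ω, fun _ => 0, fun e _ => rfl, hω, ?_, ?_, ?_⟩
      · intro e _; omega
      · intro v hv; simp at hv
      · intro u hu; simp at hu
    | @insert v D' hvD IH =>
      obtain ⟨ω₀, i₀, h1, h2, h3, h4, h5⟩ := IH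
      -- current sums
      set σ₀ : V → ℕ := fun u => ∑ x ∈ G.neighborFinset u, ω₀ s(u, x) with hσ₀
      -- all edges of Ev v still have weight 2
      have hw2 : ∀ e ∈ Ev v, ω₀ e = 2 := by
        intro e he
        have : ω₀ e = ω e := by
          apply h1
          intro w hwD' hew
          have hne : v ≠ w := fun h => hvD (h ▸ hwD')
          exact Finset.disjoint_left.mp (hdisj v w hne) he hew
        rw [this]; exact hω2 v e he
      -- the neighbors of v corresponding to Ev v
      set N := (G.neighborFinset v).filter (fun u => s(v, u) ∈ Ev v) with hNdef
      have hNsub : N ⊆ G.neighborFinset v := Finset.filter_subset _ _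
      have himg : Ev v = N.image (fun u => s(v, u)) := by
        ext e
        simp only [Finset.mem_image, hNdef, Finset.mem_filter,
          SimpleGraph.mem_neighborFinset]
        constructor
        · intro he
          obtain ⟨heE, hve⟩ := hEv v e he
          obtain ⟨u, rfl⟩ := Sym2.mem_iff_exists.mp hve
          exact ⟨u, ⟨G.mem_edgeSet.mp heE, he⟩, rfl⟩
        · rintro ⟨u, ⟨_, hEvu⟩, rfl⟩; exact hEvu
      have hNcard : (Ev v).card = N.card := by
        rw [himg, Finset.card_image_of_injOn]
        intro x _ y _ hxy
        exact Sym2.congr_right.mp hxy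
      -- plus- and minus-allowed neighbors
      set Pn := N.filter (fun u => u ∉ D' ∨ (σ₀ u : ℤ) = 2 * i₀ u) with hPdef
      set Mn := N.filter (fun u => u ∉ D' ∨ (σ₀ u : ℤ) = 2 * i₀ u + 1) with hMdef
      have hPsub : Pn ⊆ N := Finset.filter_subset _ _
      have hMsub : Mn ⊆ N := Finset.filter_subset _ _
      have hPM : N ⊆ Pn ∪ Mn := by
        intro u hu
        by_cases hD : u ∈ D'
        · rcases h4 u hD with h | h
          · exact Finset.mem_union_left _ (Finset.mem_filter.mpr ⟨hu, Or.inr h⟩)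
          · exact Finset.mem_union_right _ (Finset.mem_filter.mpr ⟨hu, Or.inr h⟩)
        · exact Finset.mem_union_left _ (Finset.mem_filter.mpr ⟨hu, Or.inl hD⟩)
      have hcardPM : N.card ≤ Pn.card + Mn.card :=
        le_trans (Finset.card_le_card hPM) (Finset.card_union_le _ _)
      -- forbidden block indices
      set K := (G.neighborFinset v).filter (fun u => c u = c v) with hKdef
      set F := (K ∩ D').image i₀ with hFdef
      have hFcard : F.card ≤ K.card :=
        le_trans Finset.card_image_le (Finset.card_le_card Finset.inter_subset_left)
      have hk : 2 * K.card ≤ Mn.card + Pn.card := by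
        have h := hsize v
        rw [← hKdef] at h
        omega
      obtain ⟨d, hd1, hd2, hdF⟩ :=
        exists_block_aux (σ₀ v : ℤ) Mn.card Pn.card K.card F hFcard hk
      set iv := ((σ₀ v : ℤ) + d) / 2 with hivdef
      -- choose the sets of edges to increase / decrease
      obtain ⟨Tp, Tm, hTpP, hTmM, hTdisj, hTcard⟩ :
          ∃ Tp Tm : Finset V, Tp ⊆ Pn ∧ Tm ⊆ Mn ∧ Disjoint Tp Tm ∧
            ((Tp.card : ℤ) - Tm.card = d) := by
        rcases le_or_gt 0 d with h | h
        · obtain ⟨Tp, hsub, hcard⟩ :=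
            Finset.exists_subset_card_eq (show d.toNat ≤ Pn.card by omega)
          exact ⟨Tp, ∅, hsub, Finset.empty_subset _, Finset.disjoint_empty_right _,
            by simp [hcard]; omega⟩
        · obtain ⟨Tm, hsub, hcard⟩ :=
            Finset.exists_subset_card_eq (show (-d).toNat ≤ Mn.card by omega)
          exact ⟨∅, Tm, Finset.empty_subset _, hsub, Finset.disjoint_empty_left _,
            by simp [hcard]; omega⟩
      have hTpN : Tp ⊆ N := hTpP.trans hPsub
      have hTmN : Tm ⊆ N := hTmM.trans hMsub
      -- the new weighting
      set ω₁ : Sym2 V → ℕ := fun e =>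
        if e ∈ Tp.image (fun u => s(v, u)) then 3
        else if e ∈ Tm.image (fun u => s(v, u)) then 1 else ω₀ e with hω₁def
      set i₁ := Function.update i₀ v iv with hi₁def
      have himgmem : ∀ (T : Finset V) (u : V),
          s(v, u) ∈ T.image (fun x => s(v, x)) ↔ u ∈ T := by
        intro T u
        simp only [Finset.mem_image]
        constructor
        · rintro ⟨x, hx, hxy⟩
          rwa [← Sym2.congr_right.mp hxy]
        · intro hu; exact ⟨u, hu, rfl⟩
      have hTinE : ∀ (T : Finset V), T ⊆ N →
          ∀ e ∈ T.image (fun u => s(v, u)), e ∈ Ev v := by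
        intro T hT e he
        rw [Finset.mem_image] at he
        obtain ⟨u, hu, rfl⟩ := he
        have := hT hu
        rw [hNdef, Finset.mem_filter] at this
        exact this.2
      -- weights unchanged away from v
      have hfar : ∀ (u x : V), u ≠ v → x ≠ v → ω₁ s(u, x) = ω₀ s(u, x) := by
        intro u x hu hx
        rw [hω₁def]
        have h₁ : s(u, x) ∉ Tp.image (fun u => s(v, u)) := by
          intro h
          have := hEv v _ (hTinE Tp hTpN _ h)
          rcases Sym2.mem_iff.mp this.2 with h' | h'
          · exact hu h'.symm
          · exact hx h'.symm
        have h₂ : s(u, x) ∉ Tm.image (fun u => s(v, u)) := by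
          intro h
          have := hEv v _ (hTinE Tm hTmN _ h)
          rcases Sym2.mem_iff.mp this.2 with h' | h'
          · exact hu h'.symm
          · exact hx h'.symm
        simp [h₁, h₂]
      -- per-edge change at v
      have hterm : ∀ x, (ω₁ s(v, x) : ℤ) =
          (ω₀ s(v, x) : ℤ) + (if x ∈ Tp then 1 else 0) + (if x ∈ Tm then -1 else 0) := by
        intro x
        by_cases hp : x ∈ Tp
        · have hm : x ∉ Tm := Finset.disjoint_left.mp hTdisj hp
          have he : s(v, x) ∈ Ev v := by
            apply hTinE Tp hTpN
            rw [himgmem]; exact hp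
          have : ω₁ s(v, x) = 3 := by
            rw [hω₁def]; simp only []
            rw [if_pos ((himgmem Tp x).mpr hp)]
          rw [this, hw2 _ he, if_pos hp, if_neg hm]; norm_num
        · by_cases hm : x ∈ Tm
          · have he : s(v, x) ∈ Ev v := by
              apply hTinE Tm hTmN
              rw [himgmem]; exact hm
            have : ω₁ s(v, x) = 1 := by
              rw [hω₁def]; simp only []
              rw [if_neg (fun h => hp ((himgmem Tp x).mp h)),
                if_pos ((himgmem Tm x).mpr hm)]
            rw [this, hw2 _ he, if_neg hp, if_pos hm]; norm_num
          · have : ω₁ s(v, x) = ω₀ s(v, x) := by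
              rw [hω₁def]; simp only []
              rw [if_neg (fun h => hp ((himgmem Tp x).mp h)),
                if_neg (fun h => hm ((himgmem Tm x).mp h))]
            rw [this, if_neg hp, if_neg hm]; ring
      -- sum at v
      have hsumv : ((∑ x ∈ G.neighborFinset v, ω₁ s(v, x) : ℕ) : ℤ) = (σ₀ v : ℤ) + d := by
        push_cast
        calc ∑ x ∈ G.neighborFinset v, (ω₁ s(v, x) : ℤ)
            = ∑ x ∈ G.neighborFinset v, ((ω₀ s(v, x) : ℤ)
              + (if x ∈ Tp then 1 else 0) + (if x ∈ Tm then -1 else 0)) := by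
              exact Finset.sum_congr rfl (fun x _ => hterm x)
          _ = (σ₀ v : ℤ) + (∑ x ∈ G.neighborFinset v, (if x ∈ Tp then (1:ℤ) else 0))
              + (∑ x ∈ G.neighborFinset v, (if x ∈ Tm then (-1:ℤ) else 0)) := by
              rw [Finset.sum_add_distrib, Finset.sum_add_distrib, hσ₀]
              push_cast; ring
          _ = (σ₀ v : ℤ) + d := by
              rw [Finset.sum_ite_mem, Finset.sum_ite_mem,
                Finset.inter_eq_right.mpr (hTpN.trans hNsub),
                Finset.inter_eq_right.mpr (hTmN.trans hNsub)]
              simp only [Finset.sum_const, nsmul_eq_mul, mul_one, mul_neg_one]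
              omega
      -- sums at other vertices
      have hsumu : ∀ u, u ≠ v →
          ((∑ x ∈ G.neighborFinset u, ω₁ s(u, x) : ℕ) : ℤ)
            = (σ₀ u : ℤ) + (if u ∈ Tp then 1 else 0) + (if u ∈ Tm then -1 else 0) := by
        intro u hu
        by_cases hadj : v ∈ G.neighborFinset u
        · push_cast
          have : ∑ x ∈ G.neighborFinset u, ((ω₁ s(u, x) : ℤ) - (ω₀ s(u, x) : ℤ))
              = (ω₁ s(u, v) : ℤ) - (ω₀ s(u, v) : ℤ) := by
            apply Finset.sum_eq_single_of_mem v hadj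
            intro x hx hxv
            rw [hfar u x hu hxv]; ring
          have hsplit : ∑ x ∈ G.neighborFinset u, (ω₁ s(u, x) : ℤ)
              = (σ₀ u : ℤ) + ((ω₁ s(u, v) : ℤ) - (ω₀ s(u, v) : ℤ)) := by
            rw [← this, hσ₀]
            push_cast
            rw [← Finset.sum_add_distrib]
            exact Finset.sum_congr rfl (fun x _ => by ring)
          rw [hsplit]
          have : s(u, v) = s(v, u) := Sym2.eq_swap
          rw [this, hterm u]
          ring
        · have hTpu : u ∉ Tp := fun h =>
            hadj (G.mem_neighborFinset .. |>.mpr ((G.mem_neighborFinset .. |>.mp (hNsub (hTpN h))).symm))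
          have hTmu : u ∉ Tm := fun h =>
            hadj (G.mem_neighborFinset .. |>.mpr ((G.mem_neighborFinset .. |>.mp (hNsub (hTmN h))).symm))
          rw [if_neg hTpu, if_neg hTmu]
          have : ∀ x ∈ G.neighborFinset u, ω₁ s(u, x) = ω₀ s(u, x) := by
            intro x hx
            apply hfar u x hu
            intro h
            exact hadj (h ▸ hx)
          rw [Finset.sum_congr rfl this, hσ₀]
          push_cast; ring
      refine ⟨ω₁, i₁, ?_, ?_, ?_, ?_, ?_⟩
      -- (1)
      · intro e he
        have hev : e ∉ Ev v := he v (Finset.mem_insert_self v D')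
        have h₁ : e ∉ Tp.image (fun u => s(v, u)) := fun h => hev (hTinE Tp hTpN e h)
        have h₂ : e ∉ Tm.image (fun u => s(v, u)) := fun h => hev (hTinE Tm hTmN e h)
        have : ω₁ e = ω₀ e := by rw [hω₁def]; simp [h₁, h₂]
        rw [this]
        exact h1 e (fun w hw => he w (Finset.mem_insert_of_mem hw))
      -- (2)
      · intro e heE
        rw [hω₁def]
        by_cases h₁ : e ∈ Tp.image (fun u => s(v, u))
        · simp [h₁]
        · by_cases h₂ : e ∈ Tm.image (fun u => s(v, u))
          · simp [h₁, h₂]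
          · simp only [h₁, h₂, if_false]; exact h2 e heE
      -- (3)
      · intro e heE
        rw [hω₁def]
        by_cases h₁ : e ∈ Tp.image (fun u => s(v, u))
        · have := hω2 v e (hTinE Tp hTpN e h₁)
          simp only [h₁, if_true, this]; norm_num
        · by_cases h₂ : e ∈ Tm.image (fun u => s(v, u))
          · have := hω2 v e (hTinE Tm hTmN e h₂)
            simp only [h₁, if_false, h₂, if_true, this]; norm_num
          · simp only [h₁, h₂, if_false]; exact h3 e heE
      -- (4)
      · intro u hu
        rcases Finset.mem_insert.mp hu with rfl | huD'
        · rw [hsumv]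
          have : i₁ u = iv := by rw [hi₁def]; exact Function.update_self ..
          rw [this]
          have h2d := Int.mul_ediv_add_emod ((σ₀ u : ℤ) + d) 2
          rcases Int.emod_two_eq ((σ₀ u : ℤ) + d) with h | h
          · left; rw [hivdef]; omega
          · right; rw [hivdef]; omega
        · have hne : u ≠ v := fun h => hvD (h ▸ huD')
          have hiu : i₁ u = i₀ u := by
            rw [hi₁def]; exact Function.update_of_ne hne _ _
          rw [hsumu u hne, hiu]
          by_cases hp : u ∈ Tp
          · have hm : u ∉ Tm := Finset.disjoint_left.mp hTdisj hp
            have := hTpP hp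
            rw [hPdef, Finset.mem_filter] at this
            rcases this.2 with h | h
            · exact absurd huD' h
            · right; rw [if_pos hp, if_neg hm, h]; ring
          · by_cases hm : u ∈ Tm
            · have := hTmM hm
              rw [hMdef, Finset.mem_filter] at this
              rcases this.2 with h | h
              · exact absurd huD' h
              · left; rw [if_neg hp, if_pos hm, h]; ring
            · rw [if_neg hp, if_neg hm]
              rcases h4 u huD' with h | h
              · left; simp only [hσ₀]; omega
              · right; simp only [hσ₀]; omega
      -- (5)
      · intro u hu w hw hadj hcc
        have hK' : ∀ z, G.Adj v z → c z = c v → z ∈ D' → i₀ z ∈ F := by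
          intro z hz hcz hzD'
          rw [hFdef]
          apply Finset.mem_image_of_mem
          rw [Finset.mem_inter, hKdef, Finset.mem_filter, SimpleGraph.mem_neighborFinset]
          exact ⟨⟨hz, hcz⟩, hzD'⟩
        rcases Finset.mem_insert.mp hu with rfl | huD' <;>
          rcases Finset.mem_insert.mp hw with rfl | hwD'
        · exact absurd hadj (G.irrefl)
        · have hiw : i₁ w = i₀ w := by
            rw [hi₁def]; exact Function.update_of_ne (by rintro rfl; exact hvD hwD') _ _
          have hiu : i₁ u = iv := by rw [hi₁def]; exact Function.update_self ..
          rw [hiu, hiw]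
          intro h
          exact hdF (h ▸ hK' w hadj hcc.symm hwD')
          
        · have hiu : i₁ u = i₀ u := by
            rw [hi₁def]; exact Function.update_of_ne (by rintro rfl; exact hvD huD') _ _
          have hiw : i₁ w = iv := by rw [hi₁def]; exact Function.update_self ..
          rw [hiu, hiw]
          intro h
          exact hdF (h ▸ hK' u hadj.symm hcc huD')
        · have hiu : i₁ u = i₀ u := by
            rw [hi₁def]; exact Function.update_of_ne (by rintro rfl; exact hvD huD') _ _
          have hiw : i₁ w = i₀ w := by
            rw [hi₁def]; exact Function.update_of_ne (by rintro rfl; exact hvD hwD') _ _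
          rw [hiu, hiw]
          exact h5 u huD' w hwD' hadj hcc
  obtain ⟨ω', i, h1, h2, h3, h4, h5⟩ := main Finset.univ
  refine ⟨ω', i, ?_, h2, h3, fun v => h4 v (Finset.mem_univ v),
    fun u v => h5 u (Finset.mem_univ u) v (Finset.mem_univ v), ?_⟩
  · intro e he
    exact h1 e (fun w _ => he w)
  · intro u v hadj hcc hsum
    have hiu := h4 u (Finset.mem_univ u)
    have hiv := h4 v (Finset.mem_univ v)
    have hne := h5 u (Finset.mem_univ u) v (Finset.mem_univ v) hadj hcc
    have : ((∑ x ∈ G.neighborFinset u, ω' s(u, x) : ℕ) : ℤ)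
        = ((∑ x ∈ G.neighborFinset v, ω' s(v, x) : ℕ) : ℤ) := by exact_mod_cast hsum
    rcases hiu with h | h <;> rcases hiv with h' | h' <;> omega
end
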